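/- Mirror-Prox master lemma: Let μ̃ ∈ M(Z), let h, h' : Z → ℝ be bounded measurable, let η > 0, and set μ = MD_η(μ̃, h) and μ̃₊ = MD_η(μ̃, h'). Then for every μ⋆ ∈ M(Z) with KL(μ⋆‖μ̃) < ∞: η (∫_Z h' dμ − ∫_Z h' dμ⋆) ≤ KL(μ⋆‖μ̃) − KL(μ⋆‖μ̃₊) + (η²/2) ‖h − h'‖∞² − 2 dTV(μ, μ̃)². -/

import Mathlib

/-!
Both updates tilt `μ̃`: `μ = μ̃.tilted (-η h)` and `μ̃₊ = μ̃.tilted (-η h')`, so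
`KL(μ⋆‖μ̃) - KL(μ⋆‖μ̃₊) = -η ∫ h' dμ⋆ - log ∫ e^{-η h'} dμ̃`. Factoring
`∫ e^{-η h'} dμ̃ = ∫ e^{-η h} dμ̃ · ∫ e^{η (h - h')} dμ` and bounding the last factor by Hoeffding's
lemma turns the claim into `KL(μ‖μ̃) ≥ 2 dTV(μ, μ̃)²`, which is Pinsker's inequality. Pinsker
itself follows from Hoeffding's lemma and the Donsker–Varadhan bound
`∫ g dμ - KL(μ‖μ̃) ≤ log ∫ e^g dμ̃`, tested on `g = λ 𝟙_A`.
-/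

open MeasureTheory Real ENNReal

namespace Paper

noncomputable section

/-- Total variation distance between two measures:
`dTV(μ,μ') = sup over measurable A of |μ(A) − μ'(A)|`. -/
def tvDist {E : Type*} [MeasurableSpace E] (μ μ' : Measure E) : ℝ :=
  ⨆ A : {A : Set E // MeasurableSet A}, |(μ A.1).toReal - (μ' A.1).toReal|

/-- Essential supremum of `|h|` on `Z` with respect to Lebesgue measure. -/
def supNormOn {d : ℕ} (Z : Set (Fin d → ℝ)) (h : (Fin d → ℝ) → ℝ) : ℝ :=
  (essSup (fun z => ENNReal.ofReal |h z|) (volume.restrict Z)).toReal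

/-- `μ ∈ M(Z)`: a Borel probability measure on `Z`, absolutely continuous w.r.t.
Lebesgue measure restricted to `Z`, with (a.e. on `Z`) positive density `ρ`. -/
def IsDensityMeasure {d : ℕ} (Z : Set (Fin d → ℝ)) (μ : Measure (Fin d → ℝ))
    (ρ : (Fin d → ℝ) → ℝ) : Prop :=
  IsProbabilityMeasure μ ∧ Measurable ρ ∧
    (∀ᵐ z ∂(volume.restrict Z), 0 < ρ z) ∧
    μ = (volume.restrict Z).withDensity (fun z => ENNReal.ofReal (ρ z))

/-- Entropic mirror-descent update `MD_η(μ, h)` for `μ` with density `ρ` on `Z`: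
the probability measure with density `ρ e^{−ηh} / ∫_Z ρ e^{−ηh}`. -/
def MDmeas {d : ℕ} (Z : Set (Fin d → ℝ)) (η : ℝ) (ρ h : (Fin d → ℝ) → ℝ) :
    Measure (Fin d → ℝ) :=
  (volume.restrict Z).withDensity
    (fun z => ENNReal.ofReal
      (ρ z * Real.exp (-η * h z) / ∫ y in Z, ρ y * Real.exp (-η * h y)))

/-- Gibbs measure on `Z` with density `e^h / ∫_Z e^h` w.r.t. Lebesgue measure. -/
def gibbsMeasure {d : ℕ} (Z : Set (Fin d → ℝ)) (h : (Fin d → ℝ) → ℝ) :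
    Measure (Fin d → ℝ) :=
  (volume.restrict Z).withDensity
    (fun z => ENNReal.ofReal (Real.exp (h z) / ∫ y in Z, Real.exp (h y)))

/-- Log-partition functional `Φ*(h) = log ∫_Z e^h dz`. -/
def logPart {d : ℕ} (Z : Set (Fin d → ℝ)) (h : (Fin d → ℝ) → ℝ) : ℝ :=
  Real.log (∫ z in Z, Real.exp (h z))

/-- Dual Bregman divergence `D*(h,h') = Φ*(h) − Φ*(h') − ∫_Z (h−h') dGibbs(h')`. -/
def dualBregman {d : ℕ} (Z : Set (Fin d → ℝ)) (h h' : (Fin d → ℝ) → ℝ) : ℝ :=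
  logPart Z h - logPart Z h' - ∫ z, (h z - h' z) ∂(gibbsMeasure Z h')

/-- Payoff operator `(Gν)(w) = ∫_Θ K(w,θ) dν(θ)`. -/
def Gop {p q : ℕ} (K : (Fin p → ℝ) → (Fin q → ℝ) → ℝ) (ν : Measure (Fin q → ℝ))
    (w : Fin p → ℝ) : ℝ :=
  ∫ θ, K w θ ∂ν

/-- Adjoint payoff operator `(G†μ)(θ) = ∫_W K(w,θ) dμ(w)`. -/
def Gadj {p q : ℕ} (K : (Fin p → ℝ) → (Fin q → ℝ) → ℝ) (μ : Measure (Fin p → ℝ))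
    (θ : Fin q → ℝ) : ℝ :=
  ∫ w, K w θ ∂μ

/-- Mixed-strategy game value `F(μ,ν) = ⟨μ,g⟩ − ⟨μ,Gν⟩`. -/
def payoff {p q : ℕ} (g : (Fin p → ℝ) → ℝ) (K : (Fin p → ℝ) → (Fin q → ℝ) → ℝ)
    (μ : Measure (Fin p → ℝ)) (ν : Measure (Fin q → ℝ)) : ℝ :=
  (∫ w, g w ∂μ) - ∫ w, Gop K ν w ∂μ

section Tilting

variable {α : Type*} [MeasurableSpace α] {Q : Measure α} {f g : α → ℝ} {C : ℝ}

lemma integrable_of_ae_abs_le [IsFiniteMeasure Q] (hf : AEMeasurable f Q)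
    (hC : ∀ᵐ x ∂Q, |f x| ≤ C) : Integrable f Q :=
  .of_bound hf.aestronglyMeasurable C (by simpa only [Real.norm_eq_abs] using hC)

lemma integrable_exp_of_ae_abs_le [IsFiniteMeasure Q] (hf : AEMeasurable f Q)
    (hC : ∀ᵐ x ∂Q, |f x| ≤ C) : Integrable (fun x ↦ exp (f x)) Q := by
  refine .of_bound hf.exp.aestronglyMeasurable (exp C) ?_
  filter_upwards [hC] with x hx
  rw [Real.norm_eq_abs, abs_exp]
  exact exp_le_exp.2 (le_of_abs_le hx)

variable [IsProbabilityMeasure Q] {D : ℝ}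

/-- **Hoeffding's lemma**. -/
theorem integral_exp_le_exp_integral_add {a b : ℝ}
    (hf : AEMeasurable f Q) (hab : ∀ᵐ x ∂Q, f x ∈ Set.Icc a b) :
    ∫ x, exp (f x) ∂Q ≤ exp (∫ x, f x ∂Q + (b - a) ^ 2 / 8) := by
  have h := (ProbabilityTheory.hasSubgaussianMGF_of_mem_Icc hf hab).mgf_le 1
  simp only [ProbabilityTheory.mgf, one_mul, exp_sub, integral_div] at h
  rw [div_le_iff₀ (exp_pos _), ← exp_add] at h
  refine h.trans_eq (congrArg exp ?_)
  push_cast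
  rw [Real.norm_eq_abs, div_pow, sq_abs]
  ring

lemma exp_integral_le_integral_exp (hf : Integrable f Q)
    (hexp : Integrable (fun x ↦ exp (f x)) Q) : exp (∫ x, f x ∂Q) ≤ ∫ x, exp (f x) ∂Q :=
  convexOn_exp.map_integral_le continuous_exp.continuousOn isClosed_univ
    (ae_of_all _ fun _ ↦ Set.mem_univ _) hf hexp

lemma log_integral_exp_eq_add_log_integral_exp_tilted
    (hf : Integrable (fun x ↦ exp (f x)) Q) (hg : Integrable (fun x ↦ exp (g x)) Q) :
    log (∫ x, exp (g x) ∂Q)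
      = log (∫ x, exp (f x) ∂Q) + log (∫ x, exp (g x - f x) ∂Q.tilted f) := by
  have h := integral_exp_tilted (μ := Q) f (g - f)
  simp only [Pi.add_apply, Pi.sub_apply, add_sub_cancel] at h
  rw [h, log_div (integral_exp_pos hg).ne' (integral_exp_pos hf).ne']
  ring

lemma isProbabilityMeasure_tilted_of_ae_abs_le (hf : AEMeasurable f Q)
    (hfC : ∀ᵐ x ∂Q, |f x| ≤ C) : IsProbabilityMeasure (Q.tilted f) :=
  isProbabilityMeasure_tilted (integrable_exp_of_ae_abs_le hf hfC)

lemma integrable_tilted_of_ae_abs_le (hf : AEMeasurable f Q) (hfC : ∀ᵐ x ∂Q, |f x| ≤ C)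
    (hg : AEMeasurable g Q) (hgD : ∀ᵐ x ∂Q, |g x| ≤ D) : Integrable g (Q.tilted f) :=
  have := isProbabilityMeasure_tilted_of_ae_abs_le hf hfC
  integrable_of_ae_abs_le (hg.mono_ac (tilted_absolutelyContinuous Q f))
    ((tilted_absolutelyContinuous Q f).ae_le hgD)

/-- Donsker–Varadhan lower bound, for the tilted measure `Q.tilted f` whose
relative entropy with respect to `Q` is `∫ f d(Q.tilted f) - log ∫ exp f dQ`. -/
theorem integral_sub_le_log_integral_exp (hf : AEMeasurable f Q) (hfC : ∀ᵐ x ∂Q, |f x| ≤ C)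
    (hg : AEMeasurable g Q) (hgD : ∀ᵐ x ∂Q, |g x| ≤ D) :
    ∫ x, g x ∂Q.tilted f - (∫ x, f x ∂Q.tilted f - log (∫ x, exp (f x) ∂Q))
      ≤ log (∫ x, exp (g x) ∂Q) := by
  have hfe := integrable_exp_of_ae_abs_le hf hfC
  have hge := integrable_exp_of_ae_abs_le hg hgD
  have := isProbabilityMeasure_tilted_of_ae_abs_le hf hfC
  have hac := tilted_absolutelyContinuous Q f
  have hdiff : ∀ᵐ x ∂Q.tilted f, |g x - f x| ≤ D + C := by
    filter_upwards [hac.ae_le hfC, hac.ae_le hgD] with x hx hy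
    exact (abs_sub _ _).trans (add_le_add hy hx)
  have hsub : AEMeasurable (fun x ↦ g x - f x) (Q.tilted f) := (hg.sub hf).mono_ac hac
  have hjensen := exp_integral_le_integral_exp (integrable_of_ae_abs_le hsub hdiff)
    (integrable_exp_of_ae_abs_le hsub hdiff)
  rw [log_integral_exp_eq_add_log_integral_exp_tilted hfe hge]
  rw [← le_log_iff_exp_le (integral_exp_pos (integrable_exp_of_ae_abs_le hsub hdiff)),
    integral_sub (integrable_tilted_of_ae_abs_le hf hfC hg hgD)
      (integrable_tilted_of_ae_abs_le hf hfC hf hfC)] at hjensen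
  linarith

theorem log_integral_exp_le_of_abs_sub_le {δ : ℝ} (hf : AEMeasurable f Q)
    (hfC : ∀ᵐ x ∂Q, |f x| ≤ C) (hg : AEMeasurable g Q) (hgD : ∀ᵐ x ∂Q, |g x| ≤ D)
    (hδ : ∀ᵐ x ∂Q, |g x - f x| ≤ δ) :
    log (∫ x, exp (g x) ∂Q)
      ≤ log (∫ x, exp (f x) ∂Q) + ∫ x, g x - f x ∂Q.tilted f + δ ^ 2 / 2 := by
  have hfe := integrable_exp_of_ae_abs_le hf hfC
  have := isProbabilityMeasure_tilted_of_ae_abs_le hf hfC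
  have hac := tilted_absolutelyContinuous Q f
  have hsub : AEMeasurable (fun x ↦ g x - f x) (Q.tilted f) := (hg.sub hf).mono_ac hac
  have hhoeffding := integral_exp_le_exp_integral_add hsub
    (hac.ae_le (hδ.mono fun x hx ↦ abs_le.1 hx))
  rw [log_integral_exp_eq_add_log_integral_exp_tilted hfe (integrable_exp_of_ae_abs_le hg hgD)]
  have := log_le_log (integral_exp_pos (integrable_exp_of_ae_abs_le hsub (hac.ae_le hδ)))
    hhoeffding
  rw [log_exp] at this
  linarith

lemma two_mul_sq_sub_measureReal_tilted_le (hf : AEMeasurable f Q)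
    (hfC : ∀ᵐ x ∂Q, |f x| ≤ C) {A : Set α} (hA : MeasurableSet A) :
    2 * ((Q.tilted f).real A - Q.real A) ^ 2
      ≤ ∫ x, f x ∂Q.tilted f - log (∫ x, exp (f x) ∂Q) := by
  set s := (Q.tilted f).real A - Q.real A
  -- the optimal slope `λ = 4 s` in the test function `λ 𝟙_A`
  set g : α → ℝ := A.indicator fun _ ↦ 4 * s
  have hg : AEMeasurable g Q := (measurable_const.indicator hA).aemeasurable
  have hg_mem : ∀ x, g x ∈ Set.Icc (min 0 (4 * s)) (max 0 (4 * s)) := by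
    intro x
    by_cases hx : x ∈ A <;> simp [g, hx]
  have hgD : ∀ᵐ x ∂Q, |g x| ≤ |4 * s| := ae_of_all _ fun x ↦ by
    by_cases hx : x ∈ A <;> simp [g, hx]
  have hlower := integral_sub_le_log_integral_exp hf hfC hg hgD
  have hupper := log_le_log (integral_exp_pos (integrable_exp_of_ae_abs_le hg hgD))
    (integral_exp_le_exp_integral_add hg (ae_of_all _ hg_mem))
  rw [log_exp, max_sub_min_eq_abs', sq_abs] at hupper
  simp only [g, integral_indicator_const _ hA, smul_eq_mul] at hlower hupper
  nlinarith

lemma tvDist_sq_le {E : Type*} [MeasurableSpace E] {μ μ' : Measure E} {c : ℝ}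
    (h : ∀ A, MeasurableSet A → (μ.real A - μ'.real A) ^ 2 ≤ c) : tvDist μ μ' ^ 2 ≤ c := by
  have hc : 0 ≤ c := by simpa using h ∅ .empty
  have : Nonempty {A : Set E // MeasurableSet A} := ⟨⟨∅, .empty⟩⟩
  have hle : tvDist μ μ' ≤ √c := ciSup_le fun A ↦ Real.abs_le_sqrt (h A.1 A.2)
  calc tvDist μ μ' ^ 2 ≤ √c ^ 2 :=
        pow_le_pow_left₀ (Real.iSup_nonneg fun _ ↦ abs_nonneg _) hle 2
    _ = c := sq_sqrt hc

/-- **Pinsker's inequality** for a tilted measure. -/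
theorem two_mul_tvDist_tilted_sq_le (hf : AEMeasurable f Q) (hfC : ∀ᵐ x ∂Q, |f x| ≤ C) :
    2 * tvDist (Q.tilted f) Q ^ 2 ≤ ∫ x, f x ∂Q.tilted f - log (∫ x, exp (f x) ∂Q) := by
  have := tvDist_sq_le (μ := Q.tilted f) (μ' := Q)
    (c := (∫ x, f x ∂Q.tilted f - log (∫ x, exp (f x) ∂Q)) / 2)
    fun A hA ↦ by linarith [two_mul_sq_sub_measureReal_tilted_le hf hfC hA]
  linarith

theorem log_integral_exp_sub_integral_tilted_le {δ : ℝ} (hf : AEMeasurable f Q)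
    (hfC : ∀ᵐ x ∂Q, |f x| ≤ C) (hg : AEMeasurable g Q) (hgD : ∀ᵐ x ∂Q, |g x| ≤ D)
    (hδ : ∀ᵐ x ∂Q, |g x - f x| ≤ δ) :
    log (∫ x, exp (g x) ∂Q) - ∫ x, g x ∂Q.tilted f
      ≤ δ ^ 2 / 2 - 2 * tvDist (Q.tilted f) Q ^ 2 := by
  have hsplit : ∫ x, g x - f x ∂Q.tilted f = ∫ x, g x ∂Q.tilted f - ∫ x, f x ∂Q.tilted f :=
    integral_sub (integrable_tilted_of_ae_abs_le hf hfC hg hgD)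
      (integrable_tilted_of_ae_abs_le hf hfC hf hfC)
  linarith [log_integral_exp_le_of_abs_sub_le hf hfC hg hgD hδ, two_mul_tvDist_tilted_sq_le hf hfC]

end Tilting

section Density

variable {α : Type*} [MeasurableSpace α] {ν : Measure α} {ρ : α → ℝ}

lemma integral_withDensity_ofReal (hρ : Measurable ρ) (hρ0 : 0 ≤ᵐ[ν] ρ) (g : α → ℝ) :
    ∫ x, g x ∂ν.withDensity (fun x ↦ ENNReal.ofReal (ρ x)) = ∫ x, ρ x * g x ∂ν := by
  rw [integral_withDensity_eq_integral_toReal_smul (by fun_prop)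
    (ae_of_all _ fun _ ↦ ofReal_lt_top)]
  refine integral_congr_ae ?_
  filter_upwards [hρ0] with x hx
  rw [toReal_ofReal hx, smul_eq_mul]

lemma integrable_mul_of_withDensity_ofReal (hρ : Measurable ρ) (hρ0 : 0 ≤ᵐ[ν] ρ) {g : α → ℝ}
    (hg : Integrable g (ν.withDensity fun x ↦ ENNReal.ofReal (ρ x))) :
    Integrable (fun x ↦ ρ x * g x) ν := by
  rw [integrable_withDensity_iff_integrable_smul' (by fun_prop)
    (ae_of_all _ fun _ ↦ ofReal_lt_top)] at hg
  refine hg.congr ?_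
  filter_upwards [hρ0] with x hx
  rw [toReal_ofReal hx, smul_eq_mul]

lemma integral_eq_one_of_withDensity_ofReal (hρ : Measurable ρ) (hρ0 : 0 ≤ᵐ[ν] ρ)
    [IsProbabilityMeasure (ν.withDensity fun x ↦ ENNReal.ofReal (ρ x))] :
    ∫ x, ρ x ∂ν = 1 := by
  simpa using (integral_withDensity_ofReal hρ hρ0 fun _ ↦ (1 : ℝ)).symm

lemma withDensity_ofReal_mul_exp_div_eq_tilted (hρ : Measurable ρ) (hρ0 : 0 ≤ᵐ[ν] ρ)
    {g : α → ℝ} (hg : Measurable g) :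
    ν.withDensity (fun x ↦ ENNReal.ofReal (ρ x * exp (g x) / ∫ y, ρ y * exp (g y) ∂ν))
      = (ν.withDensity fun x ↦ ENNReal.ofReal (ρ x)).tilted g := by
  rw [Measure.tilted, integral_withDensity_ofReal hρ hρ0,
    ← withDensity_mul₀ (by fun_prop) (by fun_prop)]
  refine withDensity_congr_ae ?_
  filter_upwards [hρ0] with x hx
  rw [Pi.mul_apply, ← ENNReal.ofReal_mul hx, mul_div_assoc]

lemma integral_mul_log_div_mul_exp_div {σ g : α → ℝ} {c : ℝ} (hρ : ∀ᵐ x ∂ν, 0 < ρ x)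
    (hσ : ∀ᵐ x ∂ν, 0 < σ x) (hc : 0 < c) (hρ1 : ∫ x, ρ x ∂ν = 1)
    (hKL : Integrable (fun x ↦ ρ x * log (ρ x / σ x)) ν)
    (hρg : Integrable (fun x ↦ ρ x * g x) ν) :
    ∫ x, ρ x * log (ρ x / (σ x * exp (g x) / c)) ∂ν
      = ∫ x, ρ x * log (ρ x / σ x) ∂ν - ∫ x, ρ x * g x ∂ν + log c := by
  have hρint : Integrable ρ ν := .of_integral_ne_zero (by simp [hρ1])
  have hpt : ∀ᵐ x ∂ν, ρ x * log (ρ x / (σ x * exp (g x) / c))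
      = ρ x * log (ρ x / σ x) - ρ x * g x + ρ x * log c := by
    filter_upwards [hρ, hσ] with x hρx hσx
    have hratio : ρ x / (σ x * exp (g x) / c) = ρ x / σ x * c * exp (-g x) := by
      rw [exp_neg]; field_simp
    rw [hratio, log_mul (by positivity) (exp_pos _).ne', log_mul (by positivity) hc.ne', log_exp]
    ring
  have hdiff : Integrable (fun x ↦ ρ x * log (ρ x / σ x) - ρ x * g x) ν := hKL.sub hρg
  rw [integral_congr_ae hpt, integral_add hdiff (hρint.mul_const _), integral_sub hKL hρg,
    integral_mul_const, hρ1, one_mul]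

end Density

lemma ae_abs_le_supNormOn {d : ℕ} {Z : Set (Fin d → ℝ)} (hZ : MeasurableSet Z)
    {f : (Fin d → ℝ) → ℝ} {C : ℝ} (hC : ∀ z ∈ Z, |f z| ≤ C) :
    ∀ᵐ z ∂volume.restrict Z, |f z| ≤ supNormOn Z f := by
  have hfin : essSup (fun z ↦ ENNReal.ofReal |f z|) (volume.restrict Z) ≠ ⊤ :=
    ne_top_of_le_ne_top ofReal_ne_top
      (essSup_le_of_ae_le _ ((ae_restrict_mem hZ).mono fun z hz ↦ ofReal_le_ofReal (hC z hz)))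
  filter_upwards [ae_le_essSup (fun z ↦ ENNReal.ofReal |f z|)] with z hz
  simpa [supNormOn, toReal_ofReal (abs_nonneg _)] using toReal_mono hfin hz

namespace IsDensityMeasure

variable {d : ℕ} {Z : Set (Fin d → ℝ)} {μ μ' : Measure (Fin d → ℝ)} {ρ ρ' : (Fin d → ℝ) → ℝ}

lemma absolutelyContinuous (hμ : IsDensityMeasure Z μ ρ) : μ ≪ volume.restrict Z :=
  hμ.2.2.2 ▸ withDensity_absolutelyContinuous _ _

lemma MDmeas_eq_tilted (hμ : IsDensityMeasure Z μ ρ) (η : ℝ) {h : (Fin d → ℝ) → ℝ}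
    (hh : Measurable h) : MDmeas Z η ρ h = μ.tilted fun z ↦ -η * h z := by
  obtain ⟨-, hρ, hρ_pos, rfl⟩ := hμ
  exact withDensity_ofReal_mul_exp_div_eq_tilted hρ (hρ_pos.mono fun _ ↦ le_of_lt)
    (hh.const_mul _)

lemma integral_mul_log_div_exp_div (hμ : IsDensityMeasure Z μ ρ)
    (hμ' : IsDensityMeasure Z μ' ρ')
    (hKL : IntegrableOn (fun z ↦ ρ' z * log (ρ' z / ρ z)) Z) {g : (Fin d → ℝ) → ℝ}
    (hg : Integrable g μ') (hge : Integrable (fun z ↦ exp (g z)) μ) :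
    ∫ z in Z, ρ' z * log (ρ' z / (ρ z * exp (g z) / ∫ y in Z, ρ y * exp (g y)))
      = (∫ z in Z, ρ' z * log (ρ' z / ρ z)) - ∫ z, g z ∂μ' + log (∫ z, exp (g z) ∂μ) := by
  obtain ⟨hμ_prob, hρ, hρ_pos, rfl⟩ := hμ
  obtain ⟨hμ'_prob, hρ', hρ'_pos, rfl⟩ := hμ'
  have hρ0 : 0 ≤ᵐ[volume.restrict Z] ρ := hρ_pos.mono fun _ ↦ le_of_lt
  have hρ'0 : 0 ≤ᵐ[volume.restrict Z] ρ' := hρ'_pos.mono fun _ ↦ le_of_lt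
  rw [integral_withDensity_ofReal hρ hρ0, integral_withDensity_ofReal hρ' hρ'0]
  refine integral_mul_log_div_mul_exp_div hρ'_pos hρ_pos ?_
    (integral_eq_one_of_withDensity_ofReal hρ' hρ'0) hKL
    (integrable_mul_of_withDensity_ofReal hρ' hρ'0 hg)
  rw [← integral_withDensity_ofReal hρ hρ0]
  exact integral_exp_pos hge

end IsDensityMeasure

theorem mirror_prox_master_lemma_general
    (d : ℕ) (Z : Set (Fin d → ℝ)) (hZ : MeasurableSet Z)
    (μt : Measure (Fin d → ℝ)) (ρt : (Fin d → ℝ) → ℝ)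
    (hμt : IsDensityMeasure Z μt ρt)
    (h h' : (Fin d → ℝ) → ℝ) (hhm : Measurable h) (hh'm : Measurable h')
    (hbd : ∃ C, ∀ z ∈ Z, |h z| ≤ C) (hbd' : ∃ C, ∀ z ∈ Z, |h' z| ≤ C)
    (η : ℝ)
    (μ : Measure (Fin d → ℝ)) (hμ : μ = MDmeas Z η ρt h)
    (μstar : Measure (Fin d → ℝ)) (ρstar : (Fin d → ℝ) → ℝ)
    (hμstar : IsDensityMeasure Z μstar ρstar)
    (hKL : IntegrableOn (fun z => ρstar z * Real.log (ρstar z / ρt z)) Z) :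
    η * ((∫ z, h' z ∂μ) - ∫ z, h' z ∂μstar)
      ≤ (∫ z in Z, ρstar z * Real.log (ρstar z / ρt z))
          - (∫ z in Z, ρstar z * Real.log (ρstar z /
              (ρt z * Real.exp (-η * h' z) / ∫ y in Z, ρt y * Real.exp (-η * h' y))))
          + η ^ 2 / 2 * (supNormOn Z (fun z => h z - h' z)) ^ 2
          - 2 * (tvDist μ μt) ^ 2 := by
  have := hμt.1
  have := hμstar.1
  obtain ⟨C, hC⟩ := hbd
  obtain ⟨C', hC'⟩ := hbd'
  have scaled_ae {ν : Measure (Fin d → ℝ)} (hν : ν ≪ volume.restrict Z) {u : (Fin d → ℝ) → ℝ}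
      {c : ℝ} (hu : ∀ᵐ z ∂volume.restrict Z, |u z| ≤ c) : ∀ᵐ z ∂ν, |-η * u z| ≤ |η| * c :=
    hν.ae_le <| hu.mono fun z hz ↦ by rw [abs_mul, abs_neg]; gcongr
  have hf := scaled_ae hμt.absolutelyContinuous ((ae_restrict_mem hZ).mono hC)
  have hg := scaled_ae hμt.absolutelyContinuous ((ae_restrict_mem hZ).mono hC')
  have hδ := scaled_ae hμt.absolutelyContinuous (ae_abs_le_supNormOn hZ (C := C + C')
    fun z hz ↦ (abs_sub _ _).trans (add_le_add (hC z hz) (hC' z hz)))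
  have hcore := log_integral_exp_sub_integral_tilted_le (hhm.const_mul (-η)).aemeasurable hf
    (hh'm.const_mul (-η)).aemeasurable hg
    (hδ.mono fun z hz ↦ by rwa [show -η * h' z - -η * h z = -(-η * (h z - h' z)) by ring, abs_neg])
  rw [← hμt.MDmeas_eq_tilted η hhm, ← hμ, integral_const_mul, mul_pow, sq_abs] at hcore
  have hg_star := scaled_ae hμstar.absolutelyContinuous ((ae_restrict_mem hZ).mono hC')
  rw [hμt.integral_mul_log_div_exp_div hμstar hKL (g := fun z ↦ -η * h' z)
    (integrable_of_ae_abs_le (hh'm.const_mul (-η)).aemeasurable hg_star)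
    (integrable_exp_of_ae_abs_le (hh'm.const_mul (-η)).aemeasurable hg), integral_const_mul]
  linarith

/-- Mirror-Prox master lemma. -/
theorem mirror_prox_master_lemma
    (d : ℕ) (Z : Set (Fin d → ℝ)) (hZ : MeasurableSet Z)
    (hZ0 : volume Z ≠ 0) (hZfin : volume Z ≠ ⊤)
    (μt : Measure (Fin d → ℝ)) (ρt : (Fin d → ℝ) → ℝ)
    (hμt : IsDensityMeasure Z μt ρt)
    (h h' : (Fin d → ℝ) → ℝ) (hhm : Measurable h) (hh'm : Measurable h')
    (hbd : ∃ C, ∀ z ∈ Z, |h z| ≤ C) (hbd' : ∃ C, ∀ z ∈ Z, |h' z| ≤ C)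
    (η : ℝ) (hη : 0 < η)
    (μ : Measure (Fin d → ℝ)) (hμ : μ = MDmeas Z η ρt h)
    (μtp : Measure (Fin d → ℝ)) (hμtp : μtp = MDmeas Z η ρt h')
    (μstar : Measure (Fin d → ℝ)) (ρstar : (Fin d → ℝ) → ℝ)
    (hμstar : IsDensityMeasure Z μstar ρstar)
    (hKL : IntegrableOn (fun z => ρstar z * Real.log (ρstar z / ρt z)) Z) :
    η * ((∫ z, h' z ∂μ) - ∫ z, h' z ∂μstar)
      ≤ (∫ z in Z, ρstar z * Real.log (ρstar z / ρt z))
          - (∫ z in Z, ρstar z * Real.log (ρstar z /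
              (ρt z * Real.exp (-η * h' z) / ∫ y in Z, ρt y * Real.exp (-η * h' y))))
          + η ^ 2 / 2 * (supNormOn Z (fun z => h z - h' z)) ^ 2
          - 2 * (tvDist μ μt) ^ 2 :=
  mirror_prox_master_lemma_general d Z hZ μt ρt hμt h h' hhm hh'm hbd hbd' η μ hμ μstar ρstar hμstar
    hKL

end

end Paper
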